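/- arXiv:2208.06942 — 3 statements merged into one kernel-verified Lean document; each statement's English description precedes it below -/
import Mathlib

section
/- Every topological space Z that is the disjoint union of an open subspace X and its complement Y can be recovered uniquely as an Artin–Wraith glueing: there is a unique admissible map f : Closed(X) → Closed(Y) such that Z is homeomorphic to X +_f Y via the identity on underlying sets; explicitly f(A) = cl_Z(A) ∩ Y. -/
open Topology TopologicalSpace

/-- a space `Z` which is the disjoint union of an open subspace `X` and its
complement `Y = Xᶜ` is recovered uniquely as an Artin–Wraith glueing: there is a unique
admissible map `f : Closed(X) → Closed(Y)` whose glueing topology (read on subsets of `Z`)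
is the topology of `Z`; explicitly `f A = cl_Z(A) ∩ Y`. -/
theorem artinWraith_recover_unique
    {Z : Type*} [TopologicalSpace Z] (X : Set Z) (hX : IsOpen X) :
    ∃! f : Closeds ↥X → Closeds ↥(Xᶜ),
      ((∀ A B : Closeds ↥X, f (A ⊔ B) = f A ⊔ f B) ∧ f ⊥ = ⊥) ∧
      (∀ S : Set Z, IsClosed S ↔
        ∃ hA : IsClosed ((Subtype.val : ↥X → Z) ⁻¹' S),
          IsClosed ((Subtype.val : ↥(Xᶜ) → Z) ⁻¹' S) ∧
            (f ⟨(Subtype.val : ↥X → Z) ⁻¹' S, hA⟩ : Set ↥(Xᶜ)) ⊆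
              (Subtype.val : ↥(Xᶜ) → Z) ⁻¹' S) ∧
      (∀ A : Closeds ↥X,
        (f A : Set ↥(Xᶜ)) =
          (Subtype.val : ↥(Xᶜ) → Z) ⁻¹' closure ((Subtype.val : ↥X → Z) '' (A : Set ↥X))) := by
  have hXc : IsClosed (Xᶜ) := hX.isClosed_compl
  refine ⟨fun A => ⟨(Subtype.val : ↥(Xᶜ) → Z) ⁻¹' closure ((Subtype.val : ↥X → Z) '' (A : Set ↥X)),
      isClosed_closure.preimage continuous_subtype_val⟩, ⟨⟨?_, ?_⟩, ?_, fun A => rfl⟩, ?_⟩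
  · intro A B
    ext1
    simp [Set.image_union, closure_union, Set.preimage_union]
  · ext1
    simp
  · intro S
    constructor
    · intro hS
      refine ⟨hS.preimage continuous_subtype_val, hS.preimage continuous_subtype_val, ?_⟩
      intro z hz
      have : closure ((Subtype.val : ↥X → Z) '' ((Subtype.val : ↥X → Z) ⁻¹' S)) ⊆ S :=
        hS.closure_subset_iff.mpr (Set.image_preimage_subset _ _)
      exact this hz
    · rintro ⟨hA, hB, hsub⟩
      -- S ∩ Xᶜ is closed in Z
      have hSXc : IsClosed (S ∩ Xᶜ) := by
        have := hXc.isClosedEmbedding_subtypeVal.isClosedMap _ hB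
        rwa [Subtype.image_preimage_coe, Set.inter_comm] at this
      -- from hA, get a closed C with C ∩ X = S ∩ X
      obtain ⟨C, hC, hCX⟩ := isClosed_induced_iff.mp hA
      have hCX' : C ∩ X = S ∩ X := by
        have := congrArg (Set.image (Subtype.val : ↥X → Z)) hCX
        rwa [Subtype.image_preimage_coe, Subtype.image_preimage_coe, Set.inter_comm X C,
          Set.inter_comm X S] at this
      apply isClosed_of_closure_subset
      intro z hz
      have hzsplit : z ∈ closure (S ∩ X) ∪ closure (S ∩ Xᶜ) := by
        rw [← closure_union]
        refine closure_mono (fun w hw => ?_) hz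
        by_cases hwX : w ∈ X
        · exact Or.inl ⟨hw, hwX⟩
        · exact Or.inr ⟨hw, hwX⟩
      rcases hzsplit with hz1 | hz2
      · by_cases hzX : z ∈ X
        · have : z ∈ C := by
            have : closure (S ∩ X) ⊆ C := by
              rw [← hC.closure_eq]
              exact closure_mono (by rw [← hCX']; exact Set.inter_subset_left)
            exact this hz1
          have : z ∈ C ∩ X := ⟨this, hzX⟩
          rw [hCX'] at this
          exact this.1
        · have hval : (Subtype.val : ↥X → Z) '' ((Subtype.val : ↥X → Z) ⁻¹' S) = S ∩ X := by
            rw [Subtype.image_preimage_coe, Set.inter_comm]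
          have : (⟨z, hzX⟩ : ↥(Xᶜ)) ∈ (Subtype.val : ↥(Xᶜ) → Z) ⁻¹' S := by
            apply hsub
            show z ∈ closure ((Subtype.val : ↥X → Z) '' ((Subtype.val : ↥X → Z) ⁻¹' S))
            rw [hval]
            exact hz1
          exact this
      · rw [hSXc.closure_eq] at hz2
        exact hz2.1
  · rintro g ⟨-, -, hg⟩
    funext A
    ext1
    exact hg A
end

section
/- Let (G, 𝒫) be a relatively hyperbolic pair whose Bowditch boundary is homeomorphic to the circle S¹ and with 𝒫 nonempty. Then every P ∈ 𝒫 is two-ended (hence hyperbolic). -/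
open Set Filter Metric Module

/-- The action has the convergence property: every infinite subset of `G` (a wandering
net) contains an infinite subset (a subnet) collapsing, with attracting point `a` and
repelling point `b`: away from all but finitely many exceptions, translates of any compact
set avoiding `b` lie in any given neighbourhood of `a`. -/
def HasConvergenceProperty (G X : Type*) [Group G] [TopologicalSpace X] [MulAction G X] :
    Prop :=
  ∀ S : Set G, S.Infinite → ∃ a b : X, ∃ S' ⊆ S, S'.Infinite ∧
    ∀ K : Set X, IsCompact K → b ∉ K → ∀ U ∈ nhds a,
      {g ∈ S' | ¬ (fun x => g • x) '' K ⊆ U}.Finite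

/-- `p` is a conical point: there is an infinite `K ⊆ G` such that for every `q ≠ p` the
closure of `{(g • p, g • q) : g ∈ K}` misses the diagonal. -/
def IsConicalPt (G : Type*) {X : Type*} [Group G] [TopologicalSpace X] [MulAction G X]
    (p : X) : Prop :=
  ∃ K : Set G, K.Infinite ∧ ∀ q : X, q ≠ p →
    Disjoint (closure {y : X × X | ∃ g ∈ K, y = (g • p, g • q)}) (Set.diagonal X)

/-- `p` is a bounded parabolic point: its stabilizer acts properly discontinuously and
cocompactly on `X - {p}`. -/
def IsBddParabolicPt (G : Type*) {X : Type*} [Group G] [TopologicalSpace X] [MulAction G X]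
    (p : X) : Prop :=
  (∀ K : Set X, K ⊆ {p}ᶜ → IsCompact K →
      {g : MulAction.stabilizer G p | ((fun x => (g : G) • x) '' K ∩ K).Nonempty}.Finite) ∧
  ∃ K : Set X, K ⊆ {p}ᶜ ∧ IsCompact K ∧
      ⋃ g : MulAction.stabilizer G p, (fun x => (g : G) • x) '' K = {p}ᶜ



private lemma symm_strictMono {e : ℝ ≃ₜ ℝ} (h : StrictMono ⇑e) : StrictMono ⇑e.symm := by
  intro x y hxy
  by_contra hc
  push_neg at hc
  have := h.monotone hc
  simp only [Homeomorph.apply_symm_apply] at this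
  exact absurd this (not_le.mpr hxy)

private lemma symm_strictAnti {e : ℝ ≃ₜ ℝ} (h : StrictAnti ⇑e) : StrictAnti ⇑e.symm := by
  intro x y hxy
  by_contra hc
  push_neg at hc
  have := h.antitone hc
  simp only [Homeomorph.apply_symm_apply] at this
  exact absurd this (not_le.mpr hxy)

private lemma core_lemma {Q : Type*} [Group Q] (a : Q → ℝ ≃ₜ ℝ)
    (hmul : ∀ g h : Q, ∀ x : ℝ, a (g * h) x = a g (a h x))
    (hpd : ∀ K : Set ℝ, IsCompact K → {g : Q | ((a g) '' K ∩ K).Nonempty}.Finite)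
    (K : Set ℝ) (hK : IsCompact K) (hcov : ∀ x : ℝ, ∃ g : Q, x ∈ a g '' K) :
    ∃ H : Subgroup Q, H.FiniteIndex ∧ Nonempty (↥H ≃* Multiplicative ℤ) := by
  classical
  -- basic facts about the action
  have ha1 : ∀ x : ℝ, a 1 x = x := by
    intro x
    have h := hmul 1 1 x
    rw [one_mul] at h
    exact ((a 1).injective h).symm
  have hainv : ∀ (g : Q) (x : ℝ), a g⁻¹ x = (a g).symm x := by
    intro g x
    apply (a g).injective
    rw [Homeomorph.apply_symm_apply, ← hmul, mul_inv_cancel, ha1]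
  have dichot : ∀ g : Q, StrictMono ⇑(a g) ∨ StrictAnti ⇑(a g) := fun g =>
    (a g).continuous.strictMono_of_inj (a g).injective
  -- the key dynamical lemma
  have key : ∀ t : ℝ, (∀ x : ℝ, ∃ g : Q, StrictMono ⇑(a g) ∧ x ≤ a g t) →
      ∃ g₀ : Q, ¬ IsOfFinOrder g₀ ∧
        ∀ f : Q, StrictMono ⇑(a f) → ∃ n : ℤ, ∃ h : Q, a h t = t ∧ f = g₀ ^ n * h := by
    intro t hub
    obtain ⟨g₁, hg₁m, hg₁⟩ := hub (t + 1)
    have hx₀lt : t < a g₁ t := lt_of_lt_of_le (lt_add_one t) hg₁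
    set x₀ := a g₁ t with hx₀def
    have hfin : {g : Q | t < a g t ∧ a g t ≤ x₀}.Finite := by
      refine (hpd (Set.Icc t x₀) isCompact_Icc).subset ?_
      rintro g ⟨h1, h2⟩
      exact ⟨a g t, ⟨⟨t, ⟨le_rfl, hx₀lt.le⟩, rfl⟩, ⟨h1.le, h2⟩⟩⟩
    have hSfin : {g : Q | StrictMono ⇑(a g) ∧ t < a g t ∧ a g t ≤ x₀}.Finite :=
      hfin.subset (fun g hg => hg.2)
    have hSne : {g : Q | StrictMono ⇑(a g) ∧ t < a g t ∧ a g t ≤ x₀}.Nonempty :=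
      ⟨g₁, hg₁m, hx₀lt, le_rfl⟩
    obtain ⟨g₀, hg₀mem, hg₀min⟩ := Set.exists_min_image _ (fun g => a g t) hSfin hSne
    obtain ⟨hg₀m, hg₀t, hg₀x₀⟩ := hg₀mem
    set m := a g₀ t with hm
    have hmin : ∀ g : Q, StrictMono ⇑(a g) → t < a g t → m ≤ a g t := by
      intro g hgm hgt
      by_cases hle : a g t ≤ x₀
      · exact hg₀min g ⟨hgm, hgt, hle⟩
      · exact hg₀x₀.trans (le_of_not_ge hle)
    -- iterates of g₀ move t up
    have hiter : ∀ n : ℕ, t < a (g₀ ^ (n + 1)) t := by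
      intro n
      induction n with
      | zero => simpa using hg₀t
      | succ k ih =>
          have e : g₀ ^ (k + 1 + 1) = g₀ * g₀ ^ (k + 1) := (pow_succ' g₀ (k + 1)).symm ▸ rfl
          have e2 : a (g₀ ^ (k + 1 + 1)) t = a g₀ (a (g₀ ^ (k + 1)) t) := by
            rw [pow_succ']; exact hmul _ _ t
          rw [e2]
          exact hg₀t.trans (hg₀m ih)
    have hnford : ¬ IsOfFinOrder g₀ := by
      intro hford
      obtain ⟨n, hn, hgn⟩ := isOfFinOrder_iff_pow_eq_one.mp hford
      obtain ⟨k, rfl⟩ := Nat.exists_eq_succ_of_ne_zero hn.ne'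
      have h2 := hiter k
      rw [hgn, ha1] at h2
      exact lt_irrefl t h2
    -- no fixed points for a g₀
    have hnofix : ∀ z : ℝ, a g₀ z ≠ z := by
      intro z hz
      have hfixn : ∀ n : ℕ, a (g₀ ^ n) z = z := by
        intro n
        induction n with
        | zero => rw [pow_zero]; exact ha1 z
        | succ k ih => rw [pow_succ', hmul, ih, hz]
      have hinj : Function.Injective (fun n : ℕ => g₀ ^ n) := by
        intro i j hij
        by_contra hne
        rcases Nat.lt_or_ge i j with h | h
        · have : g₀ ^ (j - i) = 1 := by
            have : g₀ ^ i * g₀ ^ (j - i) = g₀ ^ i * 1 := by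
              rw [mul_one, ← pow_add, Nat.add_sub_cancel' h.le]; exact hij.symm
            exact mul_left_cancel this
          exact hnford (isOfFinOrder_iff_pow_eq_one.mpr ⟨j - i, by omega, this⟩)
        · have h' : i ≠ j := hne
          have hlt : j < i := lt_of_le_of_ne h (fun e => h' e.symm)
          have : g₀ ^ (i - j) = 1 := by
            have : g₀ ^ j * g₀ ^ (i - j) = g₀ ^ j * 1 := by
              rw [mul_one, ← pow_add, Nat.add_sub_cancel' hlt.le]; exact hij
            exact mul_left_cancel this
          exact hnford (isOfFinOrder_iff_pow_eq_one.mpr ⟨i - j, by omega, this⟩)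
      have hsub : Set.range (fun n : ℕ => g₀ ^ n) ⊆ {g : Q | ((a g) '' {z} ∩ {z}).Nonempty} := by
        rintro _ ⟨n, rfl⟩
        exact ⟨z, ⟨⟨z, rfl, hfixn n⟩, rfl⟩⟩
      exact (Set.infinite_range_of_injective hinj) ((hpd {z} isCompact_singleton).subset hsub)
    -- a g₀ moves every point up
    have hfwd : ∀ z : ℝ, z < a g₀ z := by
      intro z
      by_contra hle
      push_neg at hle
      have hlt : a g₀ z < z := lt_of_le_of_ne hle (hnofix z)
      have hcont : ContinuousOn (fun x => a g₀ x - x) (Set.uIcc t z) :=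
        ((a g₀).continuous.sub continuous_id).continuousOn
      have h0 : (0 : ℝ) ∈ Set.uIcc (a g₀ t - t) (a g₀ z - z) := by
        rw [Set.mem_uIcc]
        right
        exact ⟨by linarith, by linarith⟩
      obtain ⟨w, _, hw0⟩ := intermediate_value_uIcc hcont h0
      exact hnofix w (by linarith [sub_eq_zero.mp hw0])
    -- monotonicity of all integer powers
    have hzmono : ∀ k : ℤ, StrictMono ⇑(a (g₀ ^ k)) := by
      intro k
      induction k using Int.induction_on with
      | zero =>
          have : ⇑(a (g₀ ^ (0 : ℤ))) = id := by
            funext x; rw [zpow_zero]; exact ha1 x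
          rw [this]; exact strictMono_id
      | succ k ih =>
          have e : ⇑(a (g₀ ^ ((k : ℤ) + 1))) = ⇑(a g₀) ∘ ⇑(a (g₀ ^ (k : ℤ))) := by
            funext x
            rw [show g₀ ^ ((k : ℤ) + 1) = g₀ * g₀ ^ (k : ℤ) by
              rw [add_comm, zpow_one_add]]
            exact hmul _ _ x
          rw [e]; exact hg₀m.comp ih
      | pred k ih =>
          have e : ⇑(a (g₀ ^ (-(k : ℤ) - 1))) = ⇑(a g₀⁻¹) ∘ ⇑(a (g₀ ^ (-(k : ℤ)))) := by
            funext x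
            rw [show g₀ ^ (-(k : ℤ) - 1) = g₀⁻¹ * g₀ ^ (-(k : ℤ)) by
              rw [sub_eq_add_neg, add_comm, zpow_add, zpow_neg_one]]
            exact hmul _ _ x
          rw [e]
          have hg₀inv : StrictMono ⇑(a g₀⁻¹) := by
            have : ⇑(a g₀⁻¹) = ⇑(a g₀).symm := funext (hainv g₀)
            rw [this]; exact symm_strictMono hg₀m
          exact hg₀inv.comp ih
    -- the bi-infinite orbit sequence
    set w : ℤ → ℝ := fun n => a (g₀ ^ n) t with hwdef
    have wsucc : ∀ n : ℤ, w (n + 1) = a g₀ (w n) := by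
      intro n
      show a (g₀ ^ (n + 1)) t = a g₀ (a (g₀ ^ n) t)
      rw [show g₀ ^ (n + 1) = g₀ * g₀ ^ n by rw [add_comm, zpow_one_add]]
      exact hmul _ _ t
    have wmono : StrictMono w := strictMono_int_of_lt_succ fun n => by
      rw [wsucc]; exact hfwd (w n)
    have wtop : ∀ x : ℝ, ∃ n : ℤ, x < w n := by
      intro x
      by_contra hbd
      push_neg at hbd
      set u : ℕ → ℝ := fun n => w n with hudef
      have humono : Monotone u := fun i j hij => wmono.monotone (by exact_mod_cast hij)
      have hbdd : BddAbove (Set.range u) := ⟨x, by rintro _ ⟨n, rfl⟩; exact hbd _⟩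
      have hlim := tendsto_atTop_ciSup humono hbdd
      have hlim2 : Tendsto (fun n : ℕ => u (n + 1)) atTop (nhds (⨆ n, u n)) :=
        hlim.comp (tendsto_add_atTop_nat 1)
      have hlim3 : Tendsto (fun n : ℕ => a g₀ (u n)) atTop (nhds (a g₀ (⨆ n, u n))) :=
        ((a g₀).continuous.tendsto _).comp hlim
      have heq : (fun n : ℕ => u (n + 1)) = fun n : ℕ => a g₀ (u n) := by
        funext n
        show w ((n : ℤ) + 1) = a g₀ (w n)
        · exact wsucc n
      rw [heq] at hlim2
      exact hnofix _ (tendsto_nhds_unique hlim3 hlim2)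
    have wbot : ∀ x : ℝ, ∃ n : ℤ, w n < x := by
      intro x
      by_contra hbd
      push_neg at hbd
      set u : ℕ → ℝ := fun n => w (-(n : ℤ)) with hudef
      have huanti : Antitone u := fun i j hij =>
        wmono.monotone (neg_le_neg (by exact_mod_cast hij))
      have hbdd : BddBelow (Set.range u) := ⟨x, by rintro _ ⟨n, rfl⟩; exact hbd _⟩
      have hlim := tendsto_atTop_ciInf huanti hbdd
      have hlim3 : Tendsto (fun n : ℕ => a g₀ (u (n + 1))) atTop (nhds (a g₀ (⨅ n, u n))) :=
        ((a g₀).continuous.tendsto _).comp (hlim.comp (tendsto_add_atTop_nat 1))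
      have heq : (fun n : ℕ => a g₀ (u (n + 1))) = fun n : ℕ => u n := by
        funext n
        show a g₀ (w (-((n : ℤ) + 1))) = w (-(n : ℤ))
        rw [← wsucc (-((n : ℤ) + 1))]
        congr 1
        ring
      rw [heq] at hlim3
      exact hnofix _ (tendsto_nhds_unique hlim3 hlim)
    -- decomposition of strictly monotone elements
    refine ⟨g₀, hnford, ?_⟩
    intro f hf
    set x := a f t with hxdef
    have hzer : ∀ n : ℤ, a (g₀ ^ (-n)) (w n) = t := by
      intro n
      have e1 : g₀ ^ (-n) * g₀ ^ n = 1 := by rw [← zpow_add]; simp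
      calc a (g₀ ^ (-n)) (w n) = a (g₀ ^ (-n) * g₀ ^ n) t := (hmul _ _ t).symm
        _ = a 1 t := by rw [e1]
        _ = t := ha1 t
    have hone : ∀ n : ℤ, a (g₀ ^ (-n)) (w (n + 1)) = m := by
      intro n
      have e1 : g₀ ^ (-n) * g₀ ^ (n + 1) = g₀ := by rw [← zpow_add]; ring_nf; exact zpow_one g₀
      calc a (g₀ ^ (-n)) (w (n + 1)) = a (g₀ ^ (-n) * g₀ ^ (n + 1)) t := (hmul _ _ t).symm
        _ = a g₀ t := by rw [e1]
        _ = m := rfl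
    obtain ⟨n, hn1, hn2⟩ := Int.exists_greatest_of_bdd
      (P := fun n : ℤ => w n ≤ x)
      (by
        obtain ⟨N1, hN1⟩ := wtop x
        exact ⟨N1, fun z hz => (wmono.lt_iff_lt.mp (lt_of_le_of_lt hz hN1)).le⟩)
      (by
        obtain ⟨n, hn⟩ := wbot x
        exact ⟨n, hn.le⟩)
    have hlt : x < w (n + 1) := by
      by_contra h
      push_neg at h
      exact absurd (hn2 (n + 1) h) (by omega)
    refine ⟨n, g₀ ^ (-n) * f, ?_, ?_⟩
    · have hcomp : a (g₀ ^ (-n) * f) t = a (g₀ ^ (-n)) x := hmul _ _ t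
      have hl : t ≤ a (g₀ ^ (-n)) x := by
        have h2 := (hzmono (-n)).monotone hn1
        rwa [hzer n] at h2
      have hu : a (g₀ ^ (-n)) x < m := by
        have h2 := (hzmono (-n)) hlt
        rwa [hone n] at h2
      rcases eq_or_lt_of_le hl with heq | hgt
      · rw [hcomp]; exact heq.symm
      · exfalso
        have hmono'' : StrictMono ⇑(a (g₀ ^ (-n) * f)) := by
          have e : ⇑(a (g₀ ^ (-n) * f)) = ⇑(a (g₀ ^ (-n))) ∘ ⇑(a f) := funext (hmul _ _)
          rw [e]; exact (hzmono _).comp hf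
        have h3 := hmin _ hmono'' (by rw [hcomp]; exact hgt)
        rw [hcomp] at h3
        exact absurd hu (not_lt.2 h3)
    · rw [← mul_assoc, ← zpow_add, add_neg_cancel, zpow_zero, one_mul]
  -- now produce the covering data
  have hKne : K.Nonempty := by
    obtain ⟨g, k, hk, _⟩ := hcov 0
    exact ⟨k, hk⟩
  set c := sInf K with hc
  set d := sSup K with hd
  have hKc : ∀ k ∈ K, c ≤ k := fun k hk => csInf_le hK.bddBelow hk
  have hKd : ∀ k ∈ K, k ≤ d := fun k hk => le_csSup hK.bddAbove hk
  have main : ∃ t : ℝ, ∃ g₀ : Q, ¬ IsOfFinOrder g₀ ∧ ∃ F : Set Q, F.Finite ∧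
      ∀ q : Q, ∃ n : ℤ, ∃ f ∈ F, q = g₀ ^ n * f := by
    have hfixfin : ∀ t : ℝ, {h : Q | a h t = t}.Finite := fun t =>
      (hpd {t} isCompact_singleton).subset (fun h hh => ⟨t, ⟨⟨t, rfl, hh⟩, rfl⟩⟩)
    rcases em (∃ r : Q, StrictAnti ⇑(a r)) with ⟨r, hr⟩ | hnr
    · set t := max d (a r c) with ht
      have hrinvanti : StrictAnti ⇑(a r⁻¹) := by
        have e : ⇑(a r⁻¹) = ⇑(a r).symm := funext (hainv r)
        rw [e]; exact symm_strictAnti hr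
      have hmulr : ∀ g : Q, StrictAnti ⇑(a g) → StrictMono ⇑(a (g * r⁻¹)) := by
        intro g hg
        have e : ⇑(a (g * r⁻¹)) = ⇑(a g) ∘ ⇑(a r⁻¹) := funext (hmul _ _)
        rw [e]; exact hg.comp hrinvanti
      have hub : ∀ x : ℝ, ∃ g : Q, StrictMono ⇑(a g) ∧ x ≤ a g t := by
        intro x
        obtain ⟨g, k, hkK, hgk⟩ := hcov x
        rcases dichot g with hmo | han
        · exact ⟨g, hmo, by
            rw [← hgk]
            exact hmo.monotone ((hKd k hkK).trans (le_max_left _ _))⟩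
        · refine ⟨g * r⁻¹, hmulr g han, ?_⟩
          have e : a (g * r⁻¹) (a r k) = a g k := by
            rw [hmul, hainv, Homeomorph.symm_apply_apply]
          have h1 : a r k ≤ t := le_trans (hr.antitone (hKc k hkK)) (le_max_right _ _)
          calc x = a (g * r⁻¹) (a r k) := by rw [e, hgk]
            _ ≤ a (g * r⁻¹) t := (hmulr g han).monotone h1
      obtain ⟨g₀, hnford, hdec⟩ := key t hub
      refine ⟨t, g₀, hnford,
        {h : Q | a h t = t} ∪ (fun h => h * r) '' {h : Q | a h t = t},
        (hfixfin t).union ((hfixfin t).image _), ?_⟩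
      intro q
      rcases dichot q with hmo | han
      · obtain ⟨n, h, hht, rfl⟩ := hdec q hmo
        exact ⟨n, h, Or.inl hht, rfl⟩
      · obtain ⟨n, h, hht, heq⟩ := hdec (q * r⁻¹) (hmulr q han)
        refine ⟨n, h * r, Or.inr ⟨h, hht, rfl⟩, ?_⟩
        rw [← mul_assoc, ← heq, inv_mul_cancel_right]
    · have hub : ∀ x : ℝ, ∃ g : Q, StrictMono ⇑(a g) ∧ x ≤ a g d := by
        intro x
        obtain ⟨g, k, hkK, hgk⟩ := hcov x
        have hmo := (dichot g).resolve_right (fun han => hnr ⟨g, han⟩)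
        exact ⟨g, hmo, by rw [← hgk]; exact hmo.monotone (hKd k hkK)⟩
      obtain ⟨g₀, hnford, hdec⟩ := key d hub
      refine ⟨d, g₀, hnford, {h : Q | a h d = d}, hfixfin d, ?_⟩
      intro q
      have hmo := (dichot q).resolve_right (fun han => hnr ⟨q, han⟩)
      obtain ⟨n, h, hht, rfl⟩ := hdec q hmo
      exact ⟨n, h, hht, rfl⟩
  obtain ⟨t, g₀, hnford, F, hFfin, hFcov⟩ := main
  refine ⟨Subgroup.zpowers g₀, ?_, ?_⟩
  · have : Finite (Q ⧸ Subgroup.zpowers g₀) := by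
      haveI := hFfin.to_subtype
      apply Finite.of_surjective
        (fun f : F => ((QuotientGroup.mk ((f : Q)⁻¹)) : Q ⧸ Subgroup.zpowers g₀))
      intro x
      obtain ⟨q, rfl⟩ := QuotientGroup.mk_surjective x
      obtain ⟨n, f, hfF, hq⟩ := hFcov q⁻¹
      refine ⟨⟨f, hfF⟩, ?_⟩
      have hqe : q = f⁻¹ * g₀ ^ (-n) := by
        have : q⁻¹⁻¹ = (g₀ ^ n * f)⁻¹ := by rw [hq]
        rw [inv_inv] at this
        rw [this, mul_inv_rev, zpow_neg]
      show QuotientGroup.mk (f⁻¹) = QuotientGroup.mk q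
      rw [QuotientGroup.eq, inv_inv, hqe, ← mul_assoc, mul_inv_cancel, one_mul]
      exact ⟨-n, rfl⟩
    exact Subgroup.finiteIndex_of_finite_quotient (H := Subgroup.zpowers g₀)
  · have hinj : Function.Injective ⇑(zpowersHom Q g₀) := by
      intro m1 m2 h
      simp only [zpowersHom_apply] at h
      have hinjz := injective_zpow_iff_not_isOfFinOrder.mpr hnford
      exact Multiplicative.toAdd.injective (hinjz h)
    have hrange : (zpowersHom Q g₀).range = Subgroup.zpowers g₀ := by
      ext q
      simp only [MonoidHom.mem_range, Subgroup.mem_zpowers_iff, zpowersHom_apply]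
      constructor
      · rintro ⟨n, hn⟩; exact ⟨n.toAdd, hn⟩
      · rintro ⟨k, hk⟩; exact ⟨Multiplicative.ofAdd k, hk⟩
    exact ⟨(MulEquiv.subgroupCongr hrange.symm).trans (MonoidHom.ofInjective hinj).symm⟩



private noncomputable def complPtHomeo {X : Type*} [TopologicalSpace X]
    (e : X ≃ₜ Metric.sphere (0 : EuclideanSpace ℝ (Fin 2)) 1) (p : X) :
    ({p}ᶜ : Set X) ≃ₜ ℝ := by
  haveI : Fact (finrank ℝ (EuclideanSpace ℝ (Fin 2)) = 1 + 1) :=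
    ⟨by simp [finrank_euclideanSpace_fin]⟩
  set q := e p with hqdef
  have hq : ‖(q : EuclideanSpace ℝ (Fin 2))‖ = 1 := norm_eq_of_mem_sphere q
  have hqne : (q : EuclideanSpace ℝ (Fin 2)) ≠ 0 := by
    intro h
    rw [h, norm_zero] at hq
    exact one_ne_zero hq.symm
  -- step 1 : {p}ᶜ ≃ₜ {q}ᶜ
  have himg : e '' ({p}ᶜ : Set X) = ({q}ᶜ : Set (Metric.sphere (0 : EuclideanSpace ℝ (Fin 2)) 1)) := by
    rw [Set.image_compl_eq e.bijective, Set.image_singleton, hqdef]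
  let e1 : ({p}ᶜ : Set X) ≃ₜ ({q}ᶜ : Set (Metric.sphere (0 : EuclideanSpace ℝ (Fin 2)) 1)) :=
    (e.image ({p}ᶜ : Set X)).trans (Homeomorph.setCongr himg)
  -- step 2 : stereographic projection
  let st := stereographic hq
  have hsource : ({q}ᶜ : Set (Metric.sphere (0 : EuclideanSpace ℝ (Fin 2)) 1)) = st.source := by
    rw [stereographic_source]
  let e2 : ({q}ᶜ : Set (Metric.sphere (0 : EuclideanSpace ℝ (Fin 2)) 1)) ≃ₜ st.target :=
    (Homeomorph.setCongr hsource).trans st.toHomeomorphSourceTarget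
  let e3 : st.target ≃ₜ (ℝ ∙ (q : EuclideanSpace ℝ (Fin 2)))ᗮ :=
    (Homeomorph.setCongr (stereographic_target hq)).trans (Homeomorph.Set.univ _)
  -- step 3 : the orthogonal complement is 1-dimensional, hence homeomorphic to ℝ
  have h1 : finrank ℝ ((ℝ ∙ (q : EuclideanSpace ℝ (Fin 2)))ᗮ) = 1 :=
    Submodule.finrank_orthogonal_span_singleton hqne
  let b := finBasisOfFinrankEq ℝ ((ℝ ∙ (q : EuclideanSpace ℝ (Fin 2)))ᗮ : Submodule ℝ _) h1
  let lin : ((ℝ ∙ (q : EuclideanSpace ℝ (Fin 2)))ᗮ : Submodule ℝ _) ≃ₗ[ℝ] ℝ :=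
    b.equivFun.trans (LinearEquiv.funUnique (Fin 1) ℝ ℝ)
  exact e1.trans (e2.trans (e3.trans lin.toContinuousLinearEquiv.toHomeomorph))

private lemma stab_smul_ne {G X : Type*} [Group G] [MulAction G X] {p : X}
    (g : ↥(MulAction.stabilizer G p)) {y : X} (hy : y ≠ p) : (g : G) • y ≠ p := by
  intro h
  apply hy
  have hgp : (g : G) • p = p := g.2
  have h2 : (g : G) • y = (g : G) • p := by rw [h, hgp]
  exact MulAction.injective (g : G) h2

private def actHomeo {G X : Type*} [Group G] [TopologicalSpace X] [MulAction G X]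
    (hcont : ∀ g : G, Continuous fun x : X => g • x) (p : X)
    (g : ↥(MulAction.stabilizer G p)) : ({p}ᶜ : Set X) ≃ₜ ({p}ᶜ : Set X) where
  toFun y := ⟨(g : G) • (y : X),
    Set.mem_compl_singleton_iff.mpr (stab_smul_ne g (Set.mem_compl_singleton_iff.mp y.2))⟩
  invFun y := ⟨(g : G)⁻¹ • (y : X), Set.mem_compl_singleton_iff.mpr (by
    have h := stab_smul_ne g⁻¹ (Set.mem_compl_singleton_iff.mp y.2)
    simpa using h)⟩
  left_inv y := Subtype.ext (inv_smul_smul _ _)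
  right_inv y := Subtype.ext (smul_inv_smul _ _)
  continuous_toFun := Continuous.subtype_mk ((hcont _).comp continuous_subtype_val) _
  continuous_invFun := Continuous.subtype_mk ((hcont _).comp continuous_subtype_val) _

private lemma actHomeo_coe {G X : Type*} [Group G] [TopologicalSpace X] [MulAction G X]
    (hcont : ∀ g : G, Continuous fun x : X => g • x) (p : X)
    (g : ↥(MulAction.stabilizer G p)) (y : ({p}ᶜ : Set X)) :
    (↑(actHomeo hcont p g y) : X) = (g : G) • (y : X) := rfl

/-- if `(G, Ps)` is a relatively hyperbolic pair whose Bowditch boundary `X`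
is homeomorphic to the circle `S¹`, with `Ps` nonempty, then every `P ∈ Ps` is two-ended
(it contains `ℤ` as a finite-index subgroup), hence hyperbolic. -/
theorem parabolic_subgroups_of_circle_boundary_two_ended
    {G X : Type*} [Group G] [TopologicalSpace X] [CompactSpace X] [T2Space X]
    [MulAction G X]
    (hcont : ∀ g : G, Continuous fun x : X => g • x)
    (hmin : ∀ x : X, Dense (MulAction.orbit G x))
    (hconv : HasConvergenceProperty G X)
    (hgeom : ∀ x : X, IsConicalPt G x ∨ IsBddParabolicPt G x)
    (hcircle : Nonempty (X ≃ₜ Metric.sphere (0 : EuclideanSpace ℝ (Fin 2)) 1))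
    (Ps : Set (Subgroup G)) (hPsne : Ps.Nonempty)
    (hPsrep : ∀ P ∈ Ps, ∃ p : X, IsBddParabolicPt G p ∧ P = MulAction.stabilizer G p)
    (hPsall : ∀ p : X, IsBddParabolicPt G p → ∃ P ∈ Ps, ∃ g : G,
      MulAction.stabilizer G p = Subgroup.map (MulAut.conj g).toMonoidHom P) :
    ∀ P ∈ Ps, ∃ H : Subgroup ↥P, H.FiniteIndex ∧ Nonempty (↥H ≃* Multiplicative ℤ) := by
  intro P hP
  obtain ⟨p, hpar, hPeq⟩ := hPsrep P hP
  subst hPeq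
  obtain ⟨e⟩ := hcircle
  set φ : ({p}ᶜ : Set X) ≃ₜ ℝ := complPtHomeo e p with hφ
  set A : ↥(MulAction.stabilizer G p) → ℝ ≃ₜ ℝ :=
    fun g => (φ.symm.trans (actHomeo hcont p g)).trans φ with hA
  have hAapp : ∀ (g : ↥(MulAction.stabilizer G p)) (x : ℝ),
      A g x = φ (actHomeo hcont p g (φ.symm x)) := fun g x => rfl
  have hAmul : ∀ g h : ↥(MulAction.stabilizer G p), ∀ x : ℝ,
      A (g * h) x = A g (A h x) := by
    intro g h x
    rw [hAapp, hAapp, hAapp, Homeomorph.symm_apply_apply]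
    congr 1
    apply Subtype.ext
    rw [actHomeo_coe, actHomeo_coe, actHomeo_coe, Subgroup.coe_mul, mul_smul]
  have hApd : ∀ Kr : Set ℝ, IsCompact Kr →
      {g : ↥(MulAction.stabilizer G p) | ((A g) '' Kr ∩ Kr).Nonempty}.Finite := by
    intro Kr hKr
    have hKXsub : (Subtype.val '' (φ.symm '' Kr) : Set X) ⊆ {p}ᶜ := by
      rintro _ ⟨y, _, rfl⟩
      exact y.2
    have hKX : IsCompact (Subtype.val '' (φ.symm '' Kr) : Set X) :=
      (hKr.image φ.symm.continuous).image continuous_subtype_val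
    refine (hpar.1 _ hKXsub hKX).subset ?_
    rintro g ⟨x, ⟨⟨k, hk, hgk⟩, hx⟩⟩
    refine ⟨(φ.symm x : X), ⟨⟨(φ.symm k : X), ⟨φ.symm k, ⟨k, hk, rfl⟩, rfl⟩, ?_⟩,
      ⟨φ.symm x, ⟨x, hx, rfl⟩, rfl⟩⟩⟩
    show (g : G) • ((φ.symm k : X)) = ((φ.symm x : X))
    rw [← actHomeo_coe hcont p g (φ.symm k)]
    congr 1
    apply φ.injective
    rw [Homeomorph.apply_symm_apply, ← hAapp]
    exact hgk
  obtain ⟨K, hKsub, hKcomp, hKcov⟩ := hpar.2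
  have hKval : (Subtype.val '' (Subtype.val ⁻¹' K : Set ({p}ᶜ : Set X)) : Set X) = K := by
    rw [Subtype.image_preimage_coe]
    exact Set.inter_eq_self_of_subset_right hKsub
  have hKY : IsCompact (Subtype.val ⁻¹' K : Set ({p}ᶜ : Set X)) := by
    rw [Topology.IsEmbedding.subtypeVal.isCompact_iff, hKval]
    exact hKcomp
  have hKR : IsCompact (φ '' (Subtype.val ⁻¹' K : Set ({p}ᶜ : Set X))) :=
    hKY.image φ.continuous
  have hAcov : ∀ x : ℝ, ∃ g : ↥(MulAction.stabilizer G p),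
      x ∈ A g '' (φ '' (Subtype.val ⁻¹' K : Set ({p}ᶜ : Set X))) := by
    intro x
    have hy : (↑(φ.symm x) : X) ∈ ⋃ g : ↥(MulAction.stabilizer G p),
        (fun z => (g : G) • z) '' K := by
      rw [hKcov]
      exact (φ.symm x).2
    obtain ⟨g, ⟨k, hkK, hgk⟩⟩ := Set.mem_iUnion.mp hy
    refine ⟨g, φ ⟨k, hKsub hkK⟩, ⟨⟨k, hKsub hkK⟩, hkK, rfl⟩, ?_⟩
    rw [hAapp, Homeomorph.symm_apply_apply]
    have heq : actHomeo hcont p g ⟨k, hKsub hkK⟩ = φ.symm x := by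
      apply Subtype.ext
      rw [actHomeo_coe]
      exact hgk
    rw [heq, Homeomorph.apply_symm_apply]
  exact core_lemma A hAmul hApd _ hKR hAcov
end

section
/- A group acting properly discontinuously and cocompactly by homeomorphisms on the real line ℝ is virtually infinite cyclic (two-ended). -/
/-!
Every element acts as a continuous injection of `ℝ`, hence monotonically or antitonically, and
the orientation-preserving elements form a subgroup of index at most two. Cocompactness makes `G`
infinite while proper discontinuity makes point stabilizers finite, so some orientation-preserving
`g` pushes `0` to the right. The points `gⁿ • 0` then increase strictly and, by proper
discontinuity, are unbounded in both directions, so every orbit point can be moved by a power of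
`g` into the compact interval `[0, g • 0]`. Only finitely many elements of `G` send `0` there;
hence `⟨g⟩ ≅ ℤ` has finite index.
-/

open Set Function Subgroup

namespace Subgroup

variable {G : Type*} [Group G]

theorem finiteIndex_of_forall_exists_mul_mem {H : Subgroup G} {S : Set G} (hS : S.Finite)
    (hcover : ∀ g : G, ∃ h ∈ H, g * h ∈ S) : H.FiniteIndex := by
  have : Finite (G ⧸ H) := by
    refine Set.finite_univ_iff.mp <| (hS.image ((↑) : G → G ⧸ H)).subset ?_
    rintro q -
    obtain ⟨g, rfl⟩ := QuotientGroup.mk_surjective q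
    obtain ⟨h, hh, hgh⟩ := hcover g
    exact ⟨g * h, hgh, QuotientGroup.eq.mpr (by simpa using hh)⟩
  exact H.finiteIndex_of_finite_quotient

end Subgroup

theorem StrictMono.exists_le_and_lt_succ {α : Type*} [LinearOrder α] {u : ℤ → α}
    (hu : StrictMono u) (hfin : ∀ a b, {n | u n ∈ Icc a b}.Finite) (y : α) :
    ∃ n, u n ≤ y ∧ y < u (n + 1) := by
  have hbdd : ∃ m, y < u m := by
    by_contra! h
    exact (Ici_infinite 0).mono (fun n hn => (⟨hu.monotone hn, h n⟩ : u n ∈ Icc _ _))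
      (hfin (u 0) y)
  have hnonempty : ∃ m, u m ≤ y := by
    by_contra! h
    exact (Iic_infinite 0).mono (fun n hn => (⟨(h n).le, hu.monotone hn⟩ : u n ∈ Icc _ _))
      (hfin y (u 0))
  obtain ⟨m, hm⟩ := hbdd
  obtain ⟨n, hn, hmax⟩ := Int.exists_greatest_of_bdd
    ⟨m, fun k hk => (hu.lt_iff_lt.mp (hk.trans_lt hm)).le⟩ hnonempty
  exact ⟨n, hn, lt_of_not_ge fun h => by linarith [hmax (n + 1) h]⟩

section Orientation

variable (G α : Type*) [Group G] [LinearOrder α] [MulAction G α]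

def orientationSubgroup : Subgroup G where
  carrier := {g | StrictMono fun x : α => g • x}
  one_mem' := show StrictMono fun x : α => (1 : G) • x by
    simp only [one_smul]; exact strictMono_id
  mul_mem' {a b} ha hb := show StrictMono fun x : α => (a * b) • x by
    simp only [mul_smul]; exact ha.comp hb
  inv_mem' {a} ha x y hxy := ha.lt_iff_lt.mp (by simpa only [smul_inv_smul] using hxy)

variable {G α}

theorem mem_orientationSubgroup {g : G} :
    g ∈ orientationSubgroup G α ↔ StrictMono fun x : α => g • x :=
  Iff.rfl

theorem mul_mem_orientationSubgroup_of_strictAnti {a b : G} (ha : StrictAnti fun x : α => a • x)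
    (hb : StrictAnti fun x : α => b • x) : a * b ∈ orientationSubgroup G α := by
  simp only [mem_orientationSubgroup, mul_smul]; exact ha.comp hb

theorem finiteIndex_orientationSubgroup
    (hmono : ∀ g : G, (StrictMono fun x : α => g • x) ∨ StrictAnti fun x : α => g • x) :
    (orientationSubgroup G α).FiniteIndex := by
  by_cases hall : ∀ g : G, g ∈ orientationSubgroup G α
  · exact finiteIndex_of_forall_exists_mul_mem (finite_singleton 1) fun g =>
      ⟨g⁻¹, inv_mem (hall g), by simp⟩
  · push Not at hall
    obtain ⟨r, hr⟩ := hall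
    have hr_anti := (hmono r).resolve_left hr
    refine finiteIndex_of_forall_exists_mul_mem (S := {1, r⁻¹}) (toFinite _) fun g => ?_
    by_cases hg : g ∈ orientationSubgroup G α
    · exact ⟨g⁻¹, inv_mem hg, by simp⟩
    · refine ⟨(r * g)⁻¹, inv_mem ?_, by simp⟩
      exact mul_mem_orientationSubgroup_of_strictAnti hr_anti ((hmono g).resolve_left hg)

theorem exists_strictMono_smul_and_lt [Infinite G]
    (hmono : ∀ g : G, (StrictMono fun x : α => g • x) ∨ StrictAnti fun x : α => g • x)
    {x : α} (hstab : {g : G | g • x = x}.Finite) :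
    ∃ g : G, (StrictMono fun y : α => g • y) ∧ x < g • x := by
  have : (orientationSubgroup G α).FiniteIndex := finiteIndex_orientationSubgroup hmono
  have hinf : (orientationSubgroup G α : Set G).Infinite := by
    rw [← Set.infinite_coe_iff, ← not_finite_iff_infinite]
    exact fun h => Infinite.not_finite (α := G)
      ((orientationSubgroup G α).finite_iff_finite_and_finiteIndex.mpr ⟨h, this⟩)
  obtain ⟨g, hg, hgx⟩ := not_subset.mp fun h => hinf (hstab.subset h)
  rcases lt_or_gt_of_ne (hgx : g • x ≠ x) with hlt | hlt
  · refine ⟨g⁻¹, inv_mem hg, ?_⟩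
    simpa only [inv_smul_smul] using (inv_mem hg : g⁻¹ ∈ orientationSubgroup G α) hlt
  · exact ⟨g, hg, hlt⟩

theorem strictMono_zpow_smul {g : G} (hg : StrictMono fun y : α => g • y) {x : α}
    (hx : x < g • x) : StrictMono fun n : ℤ => g ^ n • x :=
  strictMono_int_of_lt_succ fun n => by
    simpa only [zpow_add_one, mul_smul] using
      (zpow_mem (mem_orientationSubgroup.mpr hg) n : g ^ n ∈ orientationSubgroup G α) hx

theorem injective_zpow_of_lt_smul {g : G} (hg : StrictMono fun y : α => g • y) {x : α}
    (hx : x < g • x) :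
    Injective fun n : ℤ => g ^ n := fun _ _ h =>
  (strictMono_zpow_smul hg hx).injective (congrArg (· • x) h)

theorem exists_zpow_smul_mem_Icc {g : G} (hg : StrictMono fun y : α => g • y) {x : α}
    (hx : x < g • x) (hfin : ∀ a b, {h : G | h • x ∈ Icc a b}.Finite) (y : α) :
    ∃ n : ℤ, g ^ n • y ∈ Icc x (g • x) := by
  obtain ⟨n, hle, hlt⟩ := (strictMono_zpow_smul hg hx).exists_le_and_lt_succ
    (fun a b => (hfin a b).preimage (f := (g ^ · : ℤ → G))
      (injective_zpow_of_lt_smul hg hx).injOn) y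
  have hmono : StrictMono fun y : α => g ^ (-n) • y :=
    zpow_mem (mem_orientationSubgroup.mpr hg) _
  refine ⟨-n, ?_, ?_⟩
  · simpa only [smul_smul, ← zpow_add, neg_add_cancel, zpow_zero, one_smul] using
      hmono.monotone hle
  · simpa only [smul_smul, ← zpow_add, neg_add_cancel_left, zpow_one] using (hmono hlt).le

end Orientation

section ProperlyDiscontinuous

variable {G X : Type*} [Group G] [TopologicalSpace X] [MulAction G X]

theorem finite_setOf_smul_mem_of_isCompact
    (hpd : ∀ K : Set X, IsCompact K → {g : G | ((fun x => g • x) '' K ∩ K).Nonempty}.Finite)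
    (x : X) {K : Set X} (hK : IsCompact K) : {g : G | g • x ∈ K}.Finite :=
  (hpd _ (hK.insert x)).subset fun _ hg =>
    ⟨_, mem_image_of_mem _ (mem_insert x K), mem_insert_of_mem _ hg⟩

theorem infinite_of_iUnion_smul_image_eq_univ [NoncompactSpace X]
    (hcont : ∀ g : G, Continuous fun x : X => g • x) {K : Set X} (hK : IsCompact K)
    (hcover : ⋃ g : G, (fun x => g • x) '' K = univ) : Infinite G := by
  by_contra hfin
  rw [not_infinite_iff_finite] at hfin
  exact noncompact_univ X (hcover ▸ isCompact_iUnion fun g => hK.image (hcont g))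

end ProperlyDiscontinuous

/-- a group acting properly discontinuously and cocompactly by
homeomorphisms on the real line is virtually infinite cyclic (two-ended): it contains
`ℤ` as a finite-index subgroup. -/
theorem properly_discontinuous_cocompact_on_real_line_virtually_Z
    {G : Type*} [Group G] [MulAction G ℝ]
    (hcont : ∀ g : G, Continuous fun x : ℝ => g • x)
    (hpd : ∀ K : Set ℝ, IsCompact K →
      {g : G | ((fun x => g • x) '' K ∩ K).Nonempty}.Finite)
    (hcc : ∃ K : Set ℝ, IsCompact K ∧ ⋃ g : G, (fun x => g • x) '' K = Set.univ) :
    ∃ H : Subgroup G, H.FiniteIndex ∧ Nonempty (↥H ≃* Multiplicative ℤ) := by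
  obtain ⟨K, hK, hcover⟩ := hcc
  have : Infinite G := infinite_of_iUnion_smul_image_eq_univ hcont hK hcover
  have horbit (K : Set ℝ) (hK : IsCompact K) : {g : G | g • (0 : ℝ) ∈ K}.Finite :=
    finite_setOf_smul_mem_of_isCompact hpd 0 hK
  obtain ⟨g, hg, hg0⟩ := exists_strictMono_smul_and_lt
    (fun g => (hcont g).strictMono_of_inj (MulAction.injective g)) (horbit {0} isCompact_singleton)
  refine ⟨zpowers g, ?_,
    ⟨(MonoidHom.ofInjective (f := zpowersHom G g) (injective_zpow_of_lt_smul hg hg0)).symm⟩⟩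
  refine finiteIndex_of_forall_exists_mul_mem
    ((horbit (Icc 0 (g • 0)) isCompact_Icc).preimage inv_injective.injOn) fun g' => ?_
  obtain ⟨n, hn⟩ := exists_zpow_smul_mem_Icc hg hg0
    (fun a b => horbit _ isCompact_Icc) (g'⁻¹ • 0)
  refine ⟨g ^ (-n), zpow_mem (mem_zpowers g) _, ?_⟩
  simpa only [mem_preimage, mem_ofPred_eq, mul_inv_rev, zpow_neg, inv_inv, mul_smul] using hn
end
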